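/- Let Z = λI + ∑_{τ=1}^t g_τ g_τᵀ with λ > 0 and g_τ ∈ ℝ^p. Then the determinant ratio satisfies log(det(Z)/det(λI)) = ∑ over eigenvalues of the Gram update, and in particular ∑_{τ=1}^t min(1, gᵀ_τ Z_{τ−1}^{−1} g_τ) ≤ 2 log(det(Z_t)/det(λI)), where Z_τ = λI + ∑_{s=1}^τ g_s g_sᵀ. -/

import Mathlib

/-!
Each rank-one update multiplies the determinant by `1 + w_τ`, where `w_τ = g_τᵀ Z_τ⁻¹ g_τ`
(matrix determinant lemma), so `log (det Z_t / det (λI)) = ∑ log (1 + w_τ)`. Since `w_τ ≥ 0`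
and `min 1 w ≤ 2 log (1 + w)` for `w ≥ 0`, the bound follows termwise.
-/

open scoped Matrix

noncomputable def Zmat {p : ℕ} (lam : ℝ) (g : ℕ → Fin p → ℝ) (τ : ℕ) :
    Matrix (Fin p) (Fin p) ℝ :=
  lam • (1 : Matrix (Fin p) (Fin p) ℝ) +
    ∑ s ∈ Finset.range τ, Matrix.vecMulVec (g s) (g s)

open Matrix

theorem Matrix.det_add_vecMulVec {n α : Type*} [Fintype n] [DecidableEq n] [CommRing α]
    {A : Matrix n n α} (hA : IsUnit A.det) (u v : n → α) :
    (A + vecMulVec u v).det = A.det * (1 + v ⬝ᵥ A⁻¹ *ᵥ u) := by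
  rw [vecMulVec_eq Unit, det_add_replicateCol_mul_replicateRow hA, Matrix.mul_assoc,
    ← replicateCol_mulVec]
  congr 1
  rw [det_unique]
  rfl

theorem Real.min_one_le_two_mul_log_one_add {w : ℝ} (hw : 0 ≤ w) :
    min 1 w ≤ 2 * Real.log (1 + w) := by
  have hlog := Real.le_log_one_add_of_nonneg hw
  have hmin : min 1 w ≤ 2 * (2 * w / (w + 2)) := by
    rw [mul_div_assoc', le_div_iff₀ (by linarith)]
    rcases le_total w 1 with h | h
    · rw [min_eq_right h]; nlinarith
    · rw [min_eq_left h]; linarith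
  linarith

section Zmat

variable {p : ℕ} (lam : ℝ) (g : ℕ → Fin p → ℝ)

theorem Zmat_zero : Zmat lam g 0 = lam • (1 : Matrix (Fin p) (Fin p) ℝ) := by
  simp [Zmat]

theorem Zmat_succ (τ : ℕ) : Zmat lam g (τ + 1) = Zmat lam g τ + vecMulVec (g τ) (g τ) := by
  rw [Zmat, Zmat, Finset.sum_range_succ, add_assoc]

variable {lam}

theorem posDef_Zmat (hlam : 0 < lam) (τ : ℕ) : (Zmat lam g τ).PosDef := by
  refine PosDef.add_posSemidef ?_ (posSemidef_sum _ fun s _ => ?_)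
  · rw [smul_one_eq_diagonal]
    exact posDef_diagonal_iff.mpr fun _ => hlam
  · simpa using posSemidef_vecMulVec_self_star (g s)

theorem dotProduct_Zmat_inv_mulVec_nonneg (hlam : 0 < lam) (τ : ℕ) :
    0 ≤ g τ ⬝ᵥ (Zmat lam g τ)⁻¹ *ᵥ g τ := by
  simpa using (posDef_Zmat g hlam τ).inv.posSemidef.dotProduct_mulVec_nonneg (g τ)

theorem det_Zmat_eq_mul_prod (hlam : 0 < lam) (t : ℕ) :
    (Zmat lam g t).det = (lam • (1 : Matrix (Fin p) (Fin p) ℝ)).det *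
      ∏ τ ∈ Finset.range t, (1 + g τ ⬝ᵥ (Zmat lam g τ)⁻¹ *ᵥ g τ) := by
  induction t with
  | zero => simp [Zmat_zero]
  | succ t ih =>
    rw [Zmat_succ, det_add_vecMulVec (posDef_Zmat g hlam t).det_pos.ne'.isUnit, ih,
      Finset.prod_range_succ, mul_assoc]

theorem log_det_Zmat_div_eq_sum (hlam : 0 < lam) (t : ℕ) :
    Real.log ((Zmat lam g t).det / (lam • (1 : Matrix (Fin p) (Fin p) ℝ)).det) =
      ∑ τ ∈ Finset.range t, Real.log (1 + g τ ⬝ᵥ (Zmat lam g τ)⁻¹ *ᵥ g τ) := by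
  have hdet0 : (lam • (1 : Matrix (Fin p) (Fin p) ℝ)).det ≠ 0 := by
    rw [← Zmat_zero]; exact (posDef_Zmat g hlam 0).det_pos.ne'
  rw [det_Zmat_eq_mul_prod g hlam, mul_div_cancel_left₀ _ hdet0, Real.log_prod]
  intro τ _
  exact (add_pos_of_pos_of_nonneg one_pos (dotProduct_Zmat_inv_mulVec_nonneg g hlam τ)).ne'

end Zmat

theorem stmt9 {p : ℕ} (lam : ℝ) (hlam : 0 < lam) (t : ℕ) (g : ℕ → Fin p → ℝ) :
    ∑ τ ∈ Finset.range t, min 1 (g τ ⬝ᵥ (Zmat lam g τ)⁻¹ *ᵥ g τ) ≤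
      2 * Real.log ((Zmat lam g t).det / (lam • (1 : Matrix (Fin p) (Fin p) ℝ)).det) := by
  rw [log_det_Zmat_div_eq_sum g hlam, Finset.mul_sum]
  exact Finset.sum_le_sum fun τ _ => Real.min_one_le_two_mul_log_one_add
    (dotProduct_Zmat_inv_mulVec_nonneg g hlam τ)
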